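/- arXiv:1403.6550 — 2 statements merged into one kernel-verified Lean document; each statement's English description precedes it below -/
import Mathlib

section
/- Assume there exist a radius R1 > 0 and a constant C_H > 0 such that σ(B(x, r)) ≤ C_H r^d for all x ∈ M and all r ∈ (0, R1). Fix a real number s with 0 < s < d. Then the mean Riesz s-potential U is Hölder continuous on M with exponent (d − s)/(d + 1): there exist constants C > 0 and t0 > 0 such that |U(x) − U(x')| ≤ C · dist(x, x')^{(d−s)/(d+1)} for all x, x' ∈ M with dist(x, x') ≤ t0. -/
/-! Split `M` at the ball `B(x, δ)`. Inside it both potentials are small: the layer-cake formula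
and the growth bound `σ(B(x, r)) ≤ C rᵈ` give `∫_{B(x, δ)} dist(x, ·)^{-s} dσ ≤ C d/(d-s) δ^{d-s}`,
and `B(x, δ) ⊆ B(x', 2δ)`. Outside it, once `2 dist(x, x') ≤ δ`, both kernels are evaluated at
distances `≥ δ/2`, where `r ↦ r^{-s}` is `s (δ/2)^{-s-1}`-Lipschitz, so they differ by
`O(δ^{-s-1} dist(x, x'))`. The choice `δ = dist(x, x')^{1/(d+1)}` turns both errors into
`O(dist(x, x')^{(d-s)/(d+1)})`. -/

open MeasureTheory Metric Filter Set

lemma abs_rpow_neg_sub_rpow_neg_le {s a b m : ℝ} (hs : 0 < s) (hm : 0 < m) (ha : m ≤ a)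
    (hb : m ≤ b) : |a ^ (-s) - b ^ (-s)| ≤ s * m ^ (-s - 1) * |a - b| := by
  have hderiv : ∀ r ∈ Ici m,
      HasDerivWithinAt (fun r : ℝ => r ^ (-s)) (-s * r ^ (-s - 1)) (Ici m) r :=
    fun r hr => (Real.hasDerivAt_rpow_const (Or.inl (hm.trans_le hr).ne')).hasDerivWithinAt
  have hbound : ∀ r ∈ Ici m, ‖-s * r ^ (-s - 1)‖ ≤ s * m ^ (-s - 1) := by
    intro r hr
    rw [norm_mul, norm_neg, Real.norm_of_nonneg hs.le,
      Real.norm_of_nonneg (Real.rpow_nonneg (hm.le.trans hr) _)]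
    exact mul_le_mul_of_nonneg_left (Real.rpow_le_rpow_of_nonpos hm hr (by linarith)) hs.le
  simpa only [Real.norm_eq_abs] using
    (convex_Ici m).norm_image_sub_le_of_norm_hasDerivWithin_le hderiv hbound hb ha

lemma two_mul_le_rpow_of_le_quarter {t p : ℝ} (ht : 0 < t) (ht4 : t ≤ 1 / 4)
    (hp : p ≤ 1 / 2) : 2 * t ≤ t ^ p := by
  have hsqrt : √t ≤ 1 / 2 := (Real.sqrt_le_left (by norm_num)).mpr (by linarith)
  calc 2 * t = 2 * √t * √t := by rw [mul_assoc, Real.mul_self_sqrt ht.le]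
    _ ≤ √t := by nlinarith [Real.sqrt_nonneg t]
    _ = t ^ (1 / 2 : ℝ) := Real.sqrt_eq_rpow t
    _ ≤ t ^ p := Real.rpow_le_rpow_of_exponent_ge ht (by linarith) hp

lemma lintegral_Ioi_ofReal_rpow {a c : ℝ} (ha : a < -1) (hc : 0 < c) :
    ∫⁻ t in Ioi c, ENNReal.ofReal (t ^ a) = ENNReal.ofReal (c ^ (a + 1) / (-a - 1)) := by
  have hform : c ^ (a + 1) / (-a - 1) = -c ^ (a + 1) / (a + 1) := by
    rw [neg_sub_left, div_neg, neg_div, add_comm]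
  rw [hform, ← integral_Ioi_rpow_of_lt ha hc,
    ofReal_integral_eq_lintegral_ofReal (integrableOn_Ioi_rpow_of_lt ha hc)]
  filter_upwards [ae_restrict_mem measurableSet_Ioi] with t ht
  exact Real.rpow_nonneg (hc.trans ht).le a

lemma abs_integral_sub_integral_le {α : Type*} [MeasurableSpace α] {μ : Measure α}
    {f g : α → ℝ} {B : Set α} (hB : MeasurableSet B) (hf : Integrable f μ)
    (hg : Integrable g μ) (hf0 : 0 ≤ f) (hg0 : 0 ≤ g) :
    |∫ y, f y ∂μ - ∫ y, g y ∂μ| ≤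
      ∫ y in B, f y ∂μ + ∫ y in B, g y ∂μ + ∫ y in Bᶜ, |f y - g y| ∂μ := by
  rw [← integral_add_compl hB hf, ← integral_add_compl hB hg, add_sub_add_comm,
    ← integral_sub (hf.integrableOn (s := Bᶜ)) hg.integrableOn]
  refine (abs_add_le _ _).trans
    (add_le_add ((abs_sub _ _).trans ?_) abs_integral_le_integral_abs)
  rw [abs_of_nonneg (setIntegral_nonneg hB fun y _ => hf0 y),
    abs_of_nonneg (setIntegral_nonneg hB fun y _ => hg0 y)]

lemma setOf_lt_dist_rpow_neg_subset_ball {M : Type*} [PseudoMetricSpace M] {x : M} {s t : ℝ}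
    (hs : 0 < s) (ht : 0 < t) : {y | t < dist x y ^ (-s)} ⊆ ball x (t ^ (-s⁻¹)) := by
  intro y (hy : t < dist x y ^ (-s))
  have hy0 : 0 < dist x y := by
    refine dist_nonneg.lt_of_ne fun h => ?_
    rw [← h, Real.zero_rpow (neg_ne_zero.mpr hs.ne')] at hy
    exact ht.not_gt hy
  have := Real.rpow_lt_rpow_of_neg ht hy (neg_lt_zero.mpr (inv_pos.mpr hs))
  rwa [← Real.rpow_mul hy0.le, neg_mul_neg, mul_inv_cancel₀ hs.ne', Real.rpow_one, dist_comm,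
    ← mem_ball] at this

section RieszKernel

variable {M : Type*} [MetricSpace M] [MeasurableSpace M] [BorelSpace M] {σ : Measure M}
  {d s C R δ : ℝ}

omit [BorelSpace M] in
lemma measure_setOf_lt_dist_rpow_neg_le [IsFiniteMeasure σ] {x : M} {t : ℝ} (hs : 0 < s)
    (hball : ∀ r, 0 < r → r < R → σ.real (ball x r) ≤ C * r ^ d) (hδ : 0 < δ)
    (hδR : δ < R) (ht : δ ^ (-s) < t) :
    σ {y | t < dist x y ^ (-s)} ≤ ENNReal.ofReal (C * t ^ (-(d / s))) := by
  have ht0 : 0 < t := (Real.rpow_pos_of_pos hδ _).trans ht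
  have hρ : t ^ (-s⁻¹) < δ :=
    calc t ^ (-s⁻¹) < (δ ^ (-s)) ^ (-s⁻¹) :=
          Real.rpow_lt_rpow_of_neg (Real.rpow_pos_of_pos hδ _) ht (by simpa using hs)
      _ = δ := by
        rw [← Real.rpow_mul hδ.le, neg_mul_neg, mul_inv_cancel₀ hs.ne', Real.rpow_one]
  calc σ {y | t < dist x y ^ (-s)} ≤ σ (ball x (t ^ (-s⁻¹))) :=
        measure_mono (setOf_lt_dist_rpow_neg_subset_ball hs ht0)
    _ ≤ ENNReal.ofReal (C * (t ^ (-s⁻¹)) ^ d) :=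
        (ofReal_measureReal (measure_ne_top _ _)).symm.trans_le <| ENNReal.ofReal_le_ofReal <|
          hball _ (Real.rpow_pos_of_pos ht0 _) (hρ.trans hδR)
    _ = ENNReal.ofReal (C * t ^ (-(d / s))) := by
        rw [← Real.rpow_mul ht0.le, neg_mul, inv_mul_eq_div]

lemma lintegral_ball_dist_rpow_neg_le [IsFiniteMeasure σ] {x : M} (hC : 0 ≤ C) (hs : 0 < s)
    (hsd : s < d) (hball : ∀ r, 0 < r → r < R → σ.real (ball x r) ≤ C * r ^ d)
    (hδ : 0 < δ) (hδR : δ < R) :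
    ∫⁻ y in ball x δ, ENNReal.ofReal (dist x y ^ (-s)) ∂σ ≤
      ENNReal.ofReal (C * (d / (d - s)) * δ ^ (d - s)) := by
  set T := δ ^ (-s) with hT
  have hT0 : 0 < T := Real.rpow_pos_of_pos hδ _
  have hexp : -(d / s) < -1 := by rw [neg_lt_neg_iff, one_lt_div hs]; exact hsd
  have hlow :
      ∀ t, σ.restrict (ball x δ) {y | t < dist x y ^ (-s)} ≤ ENNReal.ofReal (C * δ ^ d) :=
    fun t => ((measure_mono (subset_univ _)).trans_eq (Measure.restrict_apply_univ _)).trans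
      ((ofReal_measureReal (measure_ne_top _ _)).symm.trans_le
        (ENNReal.ofReal_le_ofReal (hball δ hδ hδR)))
  have hhigh : ∀ t ∈ Ioi T,
      σ.restrict (ball x δ) {y | t < dist x y ^ (-s)} ≤ ENNReal.ofReal (C * t ^ (-(d / s))) :=
    fun t ht => (Measure.restrict_apply_le _ _).trans
      (measure_setOf_lt_dist_rpow_neg_le hs hball hδ hδR ht)
  calc ∫⁻ y in ball x δ, ENNReal.ofReal (dist x y ^ (-s)) ∂σ
      = (∫⁻ t in Ioc 0 T, σ.restrict (ball x δ) {y | t < dist x y ^ (-s)}) +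
          ∫⁻ t in Ioi T, σ.restrict (ball x δ) {y | t < dist x y ^ (-s)} := by
        rw [lintegral_eq_lintegral_meas_lt _
          (ae_of_all _ fun y => Real.rpow_nonneg dist_nonneg _) (by fun_prop),
          ← Ioc_union_Ioi_eq_Ioi hT0.le,
          lintegral_union measurableSet_Ioi (Ioc_disjoint_Ioi le_rfl)]
    _ ≤ (∫⁻ _ in Ioc 0 T, ENNReal.ofReal (C * δ ^ d)) +
          ∫⁻ t in Ioi T, ENNReal.ofReal (C * t ^ (-(d / s))) :=
        add_le_add (lintegral_mono hlow) (setLIntegral_mono' measurableSet_Ioi hhigh)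
    _ = ENNReal.ofReal (C * δ ^ d * T) +
          ENNReal.ofReal (C * (T ^ (-(d / s) + 1) / (d / s - 1))) := by
        rw [setLIntegral_const, Real.volume_Ioc, sub_zero, ← ENNReal.ofReal_mul (by positivity)]
        simp_rw [ENNReal.ofReal_mul hC]
        rw [lintegral_const_mul' _ _ ENNReal.ofReal_ne_top, lintegral_Ioi_ofReal_rpow hexp hT0,
          neg_neg]
    _ = ENNReal.ofReal (C * (d / (d - s)) * δ ^ (d - s)) := by
        have hlow_val : δ ^ d * T = δ ^ (d - s) := by
          rw [hT, ← Real.rpow_add hδ, sub_eq_add_neg]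
        have hhigh_val : T ^ (-(d / s) + 1) = δ ^ (d - s) := by
          rw [hT, ← Real.rpow_mul hδ.le]; congr 1; field_simp; ring
        have hds : 0 < d / s - 1 := by linarith
        have hds' : d - s ≠ 0 := (sub_pos.mpr hsd).ne'
        rw [mul_assoc, hlow_val, hhigh_val, ← ENNReal.ofReal_add (by positivity) (by positivity)]
        congr 1
        field_simp
        ring

lemma setIntegral_ball_dist_rpow_neg_le [IsFiniteMeasure σ] {x : M} (hC : 0 ≤ C) (hs : 0 < s)
    (hsd : s < d) (hball : ∀ r, 0 < r → r < R → σ.real (ball x r) ≤ C * r ^ d)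
    (hδ : 0 < δ) (hδR : δ < R) :
    ∫ y in ball x δ, dist x y ^ (-s) ∂σ ≤ C * (d / (d - s)) * δ ^ (d - s) := by
  have hd : 0 < d := hs.trans hsd
  have hds : 0 < d - s := sub_pos.mpr hsd
  rw [integral_eq_lintegral_of_nonneg_ae (ae_of_all _ fun y => Real.rpow_nonneg dist_nonneg _)
    (Measurable.aestronglyMeasurable (by fun_prop))]
  exact ENNReal.toReal_le_of_le_ofReal (by positivity)
    (lintegral_ball_dist_rpow_neg_le hC hs hsd hball hδ hδR)

lemma integrable_dist_rpow_neg [IsFiniteMeasure σ] {x : M} (hC : 0 ≤ C) (hs : 0 < s)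
    (hsd : s < d) (hR : 0 < R)
    (hball : ∀ r, 0 < r → r < R → σ.real (ball x r) ≤ C * r ^ d) :
    Integrable (fun y => dist x y ^ (-s)) σ := by
  have hR2 : 0 < R / 2 := half_pos hR
  rw [← integrableOn_univ, ← union_compl_self (ball x (R / 2))]
  refine IntegrableOn.union ⟨Measurable.aestronglyMeasurable (by fun_prop), ?_⟩ ?_
  · rw [hasFiniteIntegral_iff_ofReal (ae_of_all _ fun y => Real.rpow_nonneg dist_nonneg _)]
    exact (lintegral_ball_dist_rpow_neg_le hC hs hsd hball hR2 (half_lt_self hR)).trans_lt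
      ENNReal.ofReal_lt_top
  · refine IntegrableOn.of_bound (measure_lt_top _ _)
      (Measurable.aestronglyMeasurable (by fun_prop)) ((R / 2) ^ (-s)) ?_
    filter_upwards [ae_restrict_mem measurableSet_ball.compl] with y hy
    rw [Real.norm_of_nonneg (Real.rpow_nonneg dist_nonneg _)]
    exact Real.rpow_le_rpow_of_nonpos hR2 (by simpa [dist_comm] using hy) (by linarith)

omit [MeasurableSpace M] [BorelSpace M] in
lemma abs_dist_rpow_neg_sub_le {x x' y : M} (hs : 0 < s) (hδ : 0 < δ)
    (hxx' : 2 * dist x x' ≤ δ) (hy : δ ≤ dist x y) :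
    |dist x y ^ (-s) - dist x' y ^ (-s)| ≤ s * (δ / 2) ^ (-s - 1) * dist x x' := by
  have hy' : δ / 2 ≤ dist x' y := by linarith [dist_triangle x x' y, dist_comm x x']
  calc |dist x y ^ (-s) - dist x' y ^ (-s)|
      ≤ s * (δ / 2) ^ (-s - 1) * |dist x y - dist x' y| :=
        abs_rpow_neg_sub_rpow_neg_le hs (half_pos hδ) (by linarith) hy'
    _ ≤ s * (δ / 2) ^ (-s - 1) * dist x x' := by gcongr; exact abs_dist_sub_le x x' y

lemma abs_integral_dist_rpow_neg_sub_le [IsProbabilityMeasure σ] (hC : 0 ≤ C) (hs : 0 < s)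
    (hsd : s < d) (hball : ∀ x r, 0 < r → r < R → σ.real (ball x r) ≤ C * r ^ d) {x x' : M}
    (hδ : 0 < δ) (hδR : 2 * δ < R) (hxx' : 2 * dist x x' ≤ δ) :
    |∫ y, dist x y ^ (-s) ∂σ - ∫ y, dist x' y ^ (-s) ∂σ| ≤
      C * (d / (d - s)) * (1 + 2 ^ (d - s)) * δ ^ (d - s) +
        s * 2 ^ (s + 1) * (δ ^ (-(s + 1)) * dist x x') := by
  have hint : ∀ z, Integrable (fun y => dist z y ^ (-s)) σ :=
    fun z => integrable_dist_rpow_neg hC hs hsd (by linarith) (hball z)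
  have hnear : ∫ y in ball x δ, dist x y ^ (-s) ∂σ ≤ C * (d / (d - s)) * δ ^ (d - s) :=
    setIntegral_ball_dist_rpow_neg_le hC hs hsd (hball x) hδ (by linarith)
  have hnear' :
      ∫ y in ball x δ, dist x' y ^ (-s) ∂σ ≤ C * (d / (d - s)) * (2 * δ) ^ (d - s) :=
    (setIntegral_mono_set (hint x').integrableOn
      (ae_of_all _ fun y => Real.rpow_nonneg dist_nonneg _)
      (ball_subset_ball' (by linarith)).eventuallyLE).trans
      (setIntegral_ball_dist_rpow_neg_le hC hs hsd (hball x') (by linarith) hδR)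
  have hfar : ∫ y in (ball x δ)ᶜ, |dist x y ^ (-s) - dist x' y ^ (-s)| ∂σ ≤
      s * (δ / 2) ^ (-s - 1) * dist x x' := by
    have hL : 0 ≤ s * (δ / 2) ^ (-s - 1) * dist x x' := by positivity
    refine (Real.le_norm_self _).trans <|
      (norm_setIntegral_le_of_norm_le_const (measure_lt_top σ _) fun y hy => ?_).trans
        (mul_le_of_le_one_right hL measureReal_le_one)
    rw [Real.norm_of_nonneg (abs_nonneg _)]
    exact abs_dist_rpow_neg_sub_le hs hδ hxx' (by simpa [dist_comm] using hy)
  have hhalf : (δ / 2) ^ (-s - 1) = 2 ^ (s + 1) * δ ^ (-(s + 1)) := by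
    rw [show -s - 1 = -(s + 1) by ring, Real.rpow_neg (by positivity), Real.rpow_neg hδ.le,
      Real.div_rpow hδ.le zero_le_two]
    field_simp
  calc |∫ y, dist x y ^ (-s) ∂σ - ∫ y, dist x' y ^ (-s) ∂σ|
      ≤ ∫ y in ball x δ, dist x y ^ (-s) ∂σ + ∫ y in ball x δ, dist x' y ^ (-s) ∂σ +
          ∫ y in (ball x δ)ᶜ, |dist x y ^ (-s) - dist x' y ^ (-s)| ∂σ :=
        abs_integral_sub_integral_le measurableSet_ball (hint x) (hint x')
          (fun y => Real.rpow_nonneg dist_nonneg _) (fun y => Real.rpow_nonneg dist_nonneg _)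
    _ ≤ C * (d / (d - s)) * δ ^ (d - s) + C * (d / (d - s)) * (2 * δ) ^ (d - s) +
          s * (δ / 2) ^ (-s - 1) * dist x x' := by gcongr
    _ = C * (d / (d - s)) * (1 + 2 ^ (d - s)) * δ ^ (d - s) +
          s * 2 ^ (s + 1) * (δ ^ (-(s + 1)) * dist x x') := by
        rw [Real.mul_rpow zero_le_two hδ.le, hhalf]
        ring

end RieszKernel

theorem mean_potential_holder_general
    {M : Type*} [MetricSpace M]
    [MeasurableSpace M] [BorelSpace M]
    (d : ℕ)
    (σ : Measure M) [IsProbabilityMeasure σ]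
    (R1 CH : ℝ) (hR1 : 0 < R1) (hCH : 0 < CH)
    (hup : ∀ (x : M) (r : ℝ), 0 < r → r < R1 → (σ (ball x r)).toReal ≤ CH * r ^ d)
    (s : ℝ) (hs0 : 0 < s) (hsd : s < d) :
    ∃ C > (0 : ℝ), ∃ t0 > (0 : ℝ), ∀ x x' : M, dist x x' ≤ t0 →
      |(∫ y, dist x y ^ (-s) ∂σ) - ∫ y, dist x' y ^ (-s) ∂σ| ≤
        C * dist x x' ^ (((d : ℝ) - s) / ((d : ℝ) + 1)) := by
  have hd : (1 : ℝ) ≤ d := Nat.one_le_cast.mpr (Nat.cast_pos.mp (hs0.trans hsd))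
  have hball : ∀ x r, 0 < r → r < R1 → σ.real (ball x r) ≤ CH * r ^ (d : ℝ) :=
    fun x r hr hrR => by rw [Real.rpow_natCast]; exact hup x r hr hrR
  have hds : 0 < (d : ℝ) - s := sub_pos.mpr hsd
  refine ⟨CH * (d / (d - s)) * (1 + 2 ^ ((d : ℝ) - s)) + s * 2 ^ (s + 1), by positivity,
    min (1 / 4) ((R1 / 4) ^ ((d : ℝ) + 1)), by positivity, fun x x' hxx' => ?_⟩
  obtain hx | ht := (dist_nonneg (x := x) (y := x')).eq_or_lt
  · rw [dist_eq_zero.mp hx.symm, sub_self, abs_zero]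
    positivity
  set t := dist x x'
  set δ := t ^ ((d : ℝ) + 1)⁻¹
  have hδ : 0 < δ := Real.rpow_pos_of_pos ht _
  have hδR : δ ≤ R1 / 4 := by
    calc δ ≤ ((R1 / 4) ^ ((d : ℝ) + 1)) ^ ((d : ℝ) + 1)⁻¹ :=
          Real.rpow_le_rpow ht.le (hxx'.trans (min_le_right _ _)) (by positivity)
      _ = R1 / 4 := Real.rpow_rpow_inv (by positivity) (by positivity)
  have htδ : 2 * t ≤ δ := two_mul_le_rpow_of_le_quarter ht (hxx'.trans (min_le_left _ _))
    (by rw [one_div]; exact inv_anti₀ two_pos (by linarith))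
  have hnear : δ ^ ((d : ℝ) - s) = t ^ (((d : ℝ) - s) / ((d : ℝ) + 1)) := by
    rw [← Real.rpow_mul ht.le, inv_mul_eq_div]
  have hfar : δ ^ (-(s + 1)) * t = t ^ (((d : ℝ) - s) / ((d : ℝ) + 1)) := by
    rw [← Real.rpow_mul ht.le, ← Real.rpow_add_one ht.ne']
    congr 1
    field_simp
    ring
  refine (abs_integral_dist_rpow_neg_sub_le hCH.le hs0 hsd hball hδ (by linarith) htδ).trans_eq ?_
  rw [hnear, hfar]
  ring

theorem mean_potential_holder
    {M : Type*} [MetricSpace M] [CompactSpace M] [ConnectedSpace M] [Nontrivial M]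
    [MeasurableSpace M] [BorelSpace M]
    (d : ℕ) (hd : 1 ≤ d)
    (σ : Measure M) [IsProbabilityMeasure σ]
    (R1 CH : ℝ) (hR1 : 0 < R1) (hCH : 0 < CH)
    (hup : ∀ (x : M) (r : ℝ), 0 < r → r < R1 → (σ (ball x r)).toReal ≤ CH * r ^ d)
    (s : ℝ) (hs0 : 0 < s) (hsd : s < d) :
    ∃ C > (0 : ℝ), ∃ t0 > (0 : ℝ), ∀ x x' : M, dist x x' ≤ t0 →
      |(∫ y, dist x y ^ (-s) ∂σ) - ∫ y, dist x' y ^ (-s) ∂σ| ≤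
        C * dist x x' ^ (((d : ℝ) - s) / ((d : ℝ) + 1)) :=
  mean_potential_holder_general d σ R1 CH hR1 hCH hup s hs0 hsd
end

section
/- Assume the Regularity hypothesis. Fix a real number s with 0 < s < d and a constant γ > 0. Then there exist constants C > 0 and D0 ∈ (0, 1), depending only on d, s, γ, C_bot, C_top and diam(M), with the following property: for every nonempty finite subset X ⊆ M with N := |X| whose distinct points satisfy dist(x, y) > γ N^{−1/d}, and for every D with 1/N < D ≤ D0, γ D^{1/d} < diam(M) and D(X) ≤ D, one has |U_X(x) − U(x)| ≤ C · D^{1−s/d} for every x ∈ X. -/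
open MeasureTheory Metric Filter

/-- Normalized ball discrepancy of a finite point set `X` with respect to `σ`. -/
noncomputable def ballDisc {M : Type*} [MetricSpace M] [MeasurableSpace M]
    (σ : Measure M) (X : Finset M) : ℝ :=
  ⨆ y : M, ⨆ r : Set.Ioi (0 : ℝ),
    |(((X : Set M) ∩ ball y (r : ℝ)).ncard : ℝ) / X.card - (σ (ball y (r : ℝ))).toReal|

/-- Mean Riesz `s`-potential of the finite set `X` at `x`, excluding `x`. -/
noncomputable def meanPotentialX {M : Type*} [MetricSpace M] (s : ℝ) (X : Finset M)
    (x : M) : ℝ :=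
  letI := Classical.decEq M
  (1 / (X.card : ℝ)) * ∑ y ∈ X.erase x, dist x y ^ (-s)

/-!
Let `ν_X` be the empirical measure of `X`, so that `U_X(x) - U(x) = ∫ |x - y|^{-s} d(ν_X - σ)(y)`.
Split the kernel at the radius `ρ = γ D^{1/d}`. Outside `B(x, ρ)` the kernel is bounded by
`ρ^{-s}` and its superlevel sets are annuli about `x`, so by the layer-cake formula the far parts
differ by at most `2 D ρ^{-s}`. Inside `B(x, ρ)` both measures give mass `O(r^d)` to punctured
balls `B(x, r) \ {x}`, `r ≤ ρ`: `σ` by regularity, `ν_X` by packing the disjoint balls of radius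
`γ N^{-1/d} / 2` about its points. Summing the kernel over dyadic shells then bounds each near part
by `O(ρ^{d-s})`. For this `ρ` both bounds are `O(D^{1-s/d})`.
-/

open scoped ENNReal NNReal

section RealArith

lemma exists_mem_Ico_div_two_pow {t ρ : ℝ} (ht : 0 < t) (htρ : t < ρ) :
    ∃ k : ℕ, t ∈ Set.Ico (ρ / 2 ^ (k + 1)) (ρ / 2 ^ k) := by
  have hex : ∃ n : ℕ, ρ / 2 ^ (n + 1) ≤ t := by
    obtain ⟨n, hn⟩ := pow_unbounded_of_one_lt (ρ / t) one_lt_two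
    refine ⟨n, (div_le_iff₀ (by positivity)).2 ?_⟩
    rw [div_lt_iff₀ ht] at hn
    have := mul_le_mul_of_nonneg_left
      (pow_le_pow_right₀ (one_le_two : (1 : ℝ) ≤ 2) (n.le_add_right 1)) ht.le
    nlinarith
  refine ⟨Nat.find hex, Nat.find_spec hex, ?_⟩
  rcases h : Nat.find hex with _ | j
  · simpa using htρ
  · exact not_le.1 (Nat.find_min hex (h ▸ j.lt_succ_self))

lemma div_two_pow_succ_rpow_neg_mul {ρ s K : ℝ} (d k : ℕ) (hρ : 0 < ρ) :
    (ρ / 2 ^ (k + 1)) ^ (-s) * (K * (ρ / 2 ^ k) ^ d) =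
      2 ^ s * K * ρ ^ ((d : ℝ) - s) * ((2 : ℝ) ^ (s - d)) ^ k := by
  have h2 : (0 : ℝ) < 2 := two_pos
  have e1 : (2 : ℝ) ^ (((k + 1 : ℕ) : ℝ) * -s) = (2 ^ s * 2 ^ (k * s))⁻¹ := by
    rw [← Real.rpow_add h2, ← Real.rpow_neg h2.le]; push_cast; ring_nf
  have e2 : (2 : ℝ) ^ ((s - d) * k) = 2 ^ (k * s) / 2 ^ (k * (d : ℝ)) := by
    rw [← Real.rpow_sub h2]; ring_nf
  rw [← Real.rpow_natCast (ρ / 2 ^ k), Real.div_rpow hρ.le (by positivity),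
    Real.div_rpow hρ.le (by positivity), ← Real.rpow_natCast (2 : ℝ) (k + 1),
    ← Real.rpow_natCast (2 : ℝ) k, ← Real.rpow_mul h2.le, ← Real.rpow_mul h2.le,
    ← Real.rpow_mul_natCast h2.le, Real.rpow_sub hρ, Real.rpow_neg hρ.le, e1, e2]
  field_simp

lemma mul_rpow_neg_one_div_pow_mul {γ N : ℝ} {d : ℕ} (hN : 0 < N) (hd : d ≠ 0) :
    (γ * N ^ (-(1 : ℝ) / d)) ^ d * N = γ ^ d := by
  rw [mul_pow, ← Real.rpow_natCast (N ^ _), ← Real.rpow_mul hN.le,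
    div_mul_cancel₀ _ (by exact_mod_cast hd), Real.rpow_neg_one, mul_assoc,
    inv_mul_cancel₀ hN.ne', mul_one]

lemma mul_mul_rpow_one_div_rpow_neg {γ D d s : ℝ} (hγ : 0 ≤ γ) (hD : 0 < D) :
    D * (γ * D ^ (1 / d)) ^ (-s) = γ ^ (-s) * D ^ (1 - s / d) := by
  rw [Real.mul_rpow hγ (by positivity), ← Real.rpow_mul hD.le, sub_eq_add_neg,
    Real.rpow_add hD, Real.rpow_one, one_div_mul_eq_div, neg_div]
  ring

lemma mul_rpow_one_div_rpow_sub {γ D d s : ℝ} (hγ : 0 ≤ γ) (hD : 0 ≤ D) (hd : d ≠ 0) :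
    (γ * D ^ (1 / d)) ^ (d - s) = γ ^ (d - s) * D ^ (1 - s / d) := by
  rw [Real.mul_rpow hγ (by positivity), ← Real.rpow_mul hD, one_div_mul_eq_div, sub_div,
    div_self hd]

end RealArith

section LayerCake

variable {α : Type*} [MeasurableSpace α]

theorem abs_integral_sub_le_of_abs_measureReal_lt_sub_le {μ ν : Measure α} [IsFiniteMeasure μ]
    [IsFiniteMeasure ν] {φ : α → ℝ} (hφ : Measurable φ) {T E : ℝ} (hT : 0 ≤ T)
    (hφT : ∀ a, φ a ∈ Set.Icc 0 T)
    (hE : ∀ t, 0 < t → |μ.real {a | t < φ a} - ν.real {a | t < φ a}| ≤ E) :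
    |∫ a, φ a ∂μ - ∫ a, φ a ∂ν| ≤ E * T := by
  have layer : ∀ (m : Measure α) [IsFiniteMeasure m],
      ∫ a, φ a ∂m = ∫ t in Set.Ioc 0 T, m.real {a | t < φ a} := by
    intro m _
    have hint : Integrable φ m := .of_bound hφ.aestronglyMeasurable T
      (ae_of_all _ fun a => by rw [Real.norm_of_nonneg (hφT a).1]; exact (hφT a).2)
    rw [hint.integral_eq_integral_meas_lt (ae_of_all _ fun a => (hφT a).1)]
    refine setIntegral_eq_of_subset_of_forall_sdiff_eq_zero measurableSet_Ioi
      Set.Ioc_subset_Ioi_self fun t ht => ?_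
    have hTt : T < t := lt_of_not_ge fun h => ht.2 ⟨ht.1, h⟩
    have hempty : {a | t < φ a} = ∅ :=
      Set.eq_empty_of_forall_notMem fun a ha => (hφT a).2.not_gt (hTt.trans ha)
    simp [hempty]
  have hintOn : ∀ (m : Measure α) [IsFiniteMeasure m],
      IntegrableOn (fun t => m.real {a | t < φ a}) (Set.Ioc 0 T) := by
    intro m _
    have hanti : Antitone fun t => m.real {a | t < φ a} := fun t t' htt' =>
      measureReal_mono fun a (ha : t' < φ a) => htt'.trans_lt ha
    refine Measure.integrableOn_of_bounded measure_Ioc_lt_top.ne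
      hanti.measurable.aestronglyMeasurable (M := m.real Set.univ) (ae_of_all _ fun t => ?_)
    rw [Real.norm_of_nonneg measureReal_nonneg]
    exact measureReal_mono (Set.subset_univ _)
  rw [layer μ, layer ν, ← integral_sub (hintOn μ) (hintOn ν), ← Real.norm_eq_abs]
  refine (norm_setIntegral_le_of_norm_le_const measure_Ioc_lt_top
    fun t ht => (hE t ht.1 : _)).trans_eq ?_
  rw [Real.volume_real_Ioc_of_le hT, sub_zero]

end LayerCake

section EmpiricalMeasure

variable {α : Type*} [MeasurableSpace α]

noncomputable def empiricalMeasure (X : Finset α) : Measure α :=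
  (X.card : ℝ≥0)⁻¹ • ∑ y ∈ X, Measure.dirac y

instance (X : Finset α) : IsFiniteMeasure (empiricalMeasure X) := by
  unfold empiricalMeasure; infer_instance

theorem isProbabilityMeasure_empiricalMeasure {X : Finset α} (hX : X.Nonempty) :
    IsProbabilityMeasure (empiricalMeasure X) := by
  have hN : (X.card : ℝ≥0) ≠ 0 := by simpa using hX.card_pos.ne'
  constructor
  simp only [empiricalMeasure, Measure.smul_apply, Measure.coe_finsetSum, Finset.sum_apply,
    measure_univ, Finset.sum_const, nsmul_eq_mul, mul_one, ENNReal.smul_def, smul_eq_mul]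
  rw [ENNReal.coe_inv hN, ENNReal.coe_natCast,
    ENNReal.inv_mul_cancel (by exact_mod_cast hN) (by simp)]

theorem measureReal_empiricalMeasure (X : Finset α) {S : Set α} (hS : MeasurableSet S) :
    (empiricalMeasure X).real S = (((X : Set α) ∩ S).ncard : ℝ) / X.card := by
  classical
  have : (X : Set α) ∩ S = ↑(X.filter (· ∈ S)) := by ext; simp
  rw [this, Set.ncard_coe_finset]
  simp [empiricalMeasure, measureReal_def, Measure.dirac_apply' _ hS, Set.indicator_apply,
    Finset.sum_boole, div_eq_inv_mul, ENNReal.toReal_smul, NNReal.smul_def]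

theorem integral_empiricalMeasure [MeasurableSingletonClass α] (X : Finset α) (f : α → ℝ) :
    ∫ y, f y ∂empiricalMeasure X = (X.card : ℝ)⁻¹ * ∑ y ∈ X, f y := by
  rw [empiricalMeasure, integral_smul_nnreal_measure,
    integral_finsetSum_measure fun y _ => integrable_dirac enorm_lt_top]
  simp [integral_dirac, NNReal.smul_def]

end EmpiricalMeasure

section Metric

variable {M : Type*} [MetricSpace M]

lemma ball_subset_insert_iUnion_sdiff_ball (x : M) (ρ : ℝ) :
    ball x ρ ⊆ insert x (⋃ k : ℕ, ball x (ρ / 2 ^ k) \ ball x (ρ / 2 ^ (k + 1))) := by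
  intro y hy
  rcases eq_or_ne y x with rfl | hyx
  · exact Set.mem_insert _ _
  obtain ⟨k, hk⟩ := exists_mem_Ico_div_two_pow (dist_pos.2 hyx) (mem_ball.1 hy)
  exact Or.inr (Set.mem_iUnion.2 ⟨k, mem_ball.2 hk.2, fun h => (mem_ball.1 h).not_ge hk.1⟩)

noncomputable def rieszCutoff (s ρ : ℝ) (x : M) : M → ℝ :=
  (ball x ρ)ᶜ.indicator fun y => dist x y ^ (-s)

theorem rieszCutoff_mem_Icc {s ρ : ℝ} (x y : M) (hs : 0 ≤ s) (hρ : 0 < ρ) :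
    rieszCutoff s ρ x y ∈ Set.Icc 0 (ρ ^ (-s)) := by
  by_cases hy : y ∈ ball x ρ
  · simp [rieszCutoff, hy, Real.rpow_nonneg hρ.le]
  · rw [rieszCutoff, Set.indicator_of_mem (Set.mem_compl hy)]
    refine ⟨Real.rpow_nonneg dist_nonneg _, Real.rpow_le_rpow_of_nonpos hρ ?_ (neg_nonpos.2 hs)⟩
    rw [dist_comm]; exact not_lt.1 hy

theorem setOf_lt_rieszCutoff {s ρ t : ℝ} (x : M) (hs : 0 < s) (hρ : 0 < ρ) (ht : 0 < t) :
    {y | t < rieszCutoff s ρ x y} = ball x (t ^ (-s)⁻¹) \ ball x ρ := by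
  ext y
  by_cases hy : y ∈ ball x ρ
  · simp [rieszCutoff, hy, ht.le]
  · have hdist : 0 < dist x y := hρ.trans_le (by rw [dist_comm]; exact not_lt.1 hy)
    simp only [rieszCutoff, Set.mem_ofPred_eq, Set.indicator_of_mem (Set.mem_compl hy),
      Set.mem_sdiff, hy, not_false_eq_true, and_true, mem_ball, dist_comm y x]
    exact (Real.lt_rpow_inv_iff_of_neg hdist ht (neg_neg_of_pos hs)).symm

variable [MeasurableSpace M]

theorem measureReal_ball_le_of_forall_le {μ : Measure M} [IsProbabilityMeasure μ] {d : ℕ}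
    {C R : ℝ} (hC : 0 ≤ C) (hR : 0 < R)
    (h : ∀ x r, 0 < r → r ≤ R → μ.real (ball x r) ≤ C * r ^ d) :
    ∀ x r, 0 < r → μ.real (ball x r) ≤ (C + (R ^ d)⁻¹) * r ^ d := by
  intro x r hr
  have hnonneg : 0 ≤ (R ^ d)⁻¹ * r ^ d := by positivity
  rcases le_or_gt r R with hrR | hRr
  · linarith [h x r hr hrR]
  · have : 1 ≤ (R ^ d)⁻¹ * r ^ d := by
      rw [inv_mul_eq_div, one_le_div (by positivity)]
      exact pow_le_pow_left₀ hR.le hRr.le d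
    nlinarith [measureReal_le_one (μ := μ) (s := ball x r), pow_pos hr d]

theorem setLIntegral_sdiff_ball_rpow_neg_dist_le (μ : Measure M) (x : M) {s a b : ℝ}
    (hs : 0 ≤ s) (ha : 0 < a) :
    ∫⁻ y in ball x b \ ball x a, ENNReal.ofReal (dist x y ^ (-s)) ∂μ ≤
      ENNReal.ofReal (a ^ (-s)) * μ (ball x b \ ball x a) := by
  rw [← setLIntegral_const]
  refine setLIntegral_mono measurable_const fun y hy => ENNReal.ofReal_le_ofReal ?_
  exact Real.rpow_le_rpow_of_nonpos ha (by simpa [dist_comm] using hy.2) (neg_nonpos.2 hs)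

variable [BorelSpace M]

theorem measurable_rpow_neg_dist (x : M) (s : ℝ) : Measurable fun y => dist x y ^ (-s) :=
  (continuous_const.dist continuous_id).measurable.pow_const _

theorem lintegral_ball_rpow_neg_dist_le (μ : Measure M) (x : M) {d : ℕ} {s K ρ : ℝ}
    (hs : 0 < s) (hsd : s < d) (hK : 0 ≤ K) (hρ : 0 < ρ)
    (hμ : ∀ r, 0 < r → r ≤ ρ → μ (ball x r \ {x}) ≤ ENNReal.ofReal (K * r ^ d)) :
    ∫⁻ y in ball x ρ, ENNReal.ofReal (dist x y ^ (-s)) ∂μ ≤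
      ENNReal.ofReal (2 ^ s * K / (1 - 2 ^ (s - d)) * ρ ^ ((d : ℝ) - s)) := by
  set q : ℝ := 2 ^ (s - d)
  have hq0 : 0 ≤ q := by positivity
  have hq1 : q < 1 := Real.rpow_lt_one_of_one_lt_of_neg one_lt_two (by linarith)
  set f : M → ℝ≥0∞ := fun y => ENNReal.ofReal (dist x y ^ (-s))
  have hshell : ∀ k : ℕ, ∫⁻ y in ball x (ρ / 2 ^ k) \ ball x (ρ / 2 ^ (k + 1)), f y ∂μ ≤
      ENNReal.ofReal (2 ^ s * K * ρ ^ ((d : ℝ) - s) * q ^ k) := fun k =>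
    calc _ ≤ ENNReal.ofReal ((ρ / 2 ^ (k + 1)) ^ (-s)) *
          μ (ball x (ρ / 2 ^ k) \ ball x (ρ / 2 ^ (k + 1))) :=
          setLIntegral_sdiff_ball_rpow_neg_dist_le μ x hs.le (by positivity)
      _ ≤ ENNReal.ofReal ((ρ / 2 ^ (k + 1)) ^ (-s)) * ENNReal.ofReal (K * (ρ / 2 ^ k) ^ d) :=
          mul_le_mul_right ((measure_mono (Set.sdiff_subset_sdiff_right
            (Set.singleton_subset_iff.2 (mem_ball_self (by positivity))))).trans
            (hμ _ (by positivity) (div_le_self hρ.le (one_le_pow₀ one_le_two)))) _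
      _ = _ := by rw [← ENNReal.ofReal_mul (by positivity), div_two_pow_succ_rpow_neg_mul d k hρ]
  -- the centre contributes nothing because `0 ^ (-s) = 0` in Lean
  have hx : f x * μ {x} = 0 := by
    simp [f, Real.zero_rpow (neg_ne_zero.2 hs.ne')]
  calc ∫⁻ y in ball x ρ, f y ∂μ
      ≤ ∫⁻ y in ⋃ k : ℕ, ball x (ρ / 2 ^ k) \ ball x (ρ / 2 ^ (k + 1)), f y ∂μ := by
        refine (lintegral_mono_set (ball_subset_insert_iUnion_sdiff_ball x ρ)).trans ?_
        rw [Set.insert_eq]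
        refine (lintegral_union_le _ _ _).trans ?_
        rw [lintegral_singleton, hx, zero_add]
    _ ≤ ∑' k : ℕ, ENNReal.ofReal (2 ^ s * K * ρ ^ ((d : ℝ) - s) * q ^ k) :=
        (lintegral_iUnion_le _ _).trans (ENNReal.tsum_le_tsum hshell)
    _ = ENNReal.ofReal (2 ^ s * K / (1 - q) * ρ ^ ((d : ℝ) - s)) := by
        rw [← ENNReal.ofReal_tsum_of_nonneg (fun k => by positivity)
          ((summable_geometric_of_lt_one hq0 hq1).mul_left _), tsum_mul_left,
          tsum_geometric_of_lt_one hq0 hq1]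
        ring_nf

theorem integrable_rpow_neg_dist {μ : Measure M} [IsFiniteMeasure μ] {x : M} {s ρ : ℝ}
    (hs : 0 ≤ s) (hρ : 0 < ρ)
    (hball : ∫⁻ y in ball x ρ, ENNReal.ofReal (dist x y ^ (-s)) ∂μ ≠ ∞) :
    Integrable (fun y => dist x y ^ (-s)) μ := by
  have hm := (measurable_rpow_neg_dist x s).aestronglyMeasurable (μ := μ)
  have hin : IntegrableOn (fun y => dist x y ^ (-s)) (ball x ρ) μ :=
    ⟨hm.restrict, (hasFiniteIntegral_iff_ofReal (ae_of_all _ fun y => by positivity)).2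
      hball.lt_top⟩
  have hout : IntegrableOn (fun y => dist x y ^ (-s)) (ball x ρ)ᶜ μ := by
    refine Measure.integrableOn_of_bounded (measure_ne_top _ _) hm (M := ρ ^ (-s))
      ((ae_restrict_iff' measurableSet_ball.compl).2 (ae_of_all _ fun y hy => ?_))
    rw [Real.norm_of_nonneg (by positivity)]
    exact Real.rpow_le_rpow_of_nonpos hρ (by simpa [dist_comm] using hy) (neg_nonpos.2 hs)
  rw [← integrableOn_univ, ← Set.union_compl_self (ball x ρ)]
  exact hin.union hout

theorem integral_rpow_neg_dist_sub_integral_rieszCutoff_mem_Icc (μ : Measure M)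
    [IsFiniteMeasure μ] (x : M) {d : ℕ} {s K ρ : ℝ} (hs : 0 < s) (hsd : s < d) (hK : 0 ≤ K)
    (hρ : 0 < ρ) (hμ : ∀ r, 0 < r → r ≤ ρ → μ.real (ball x r \ {x}) ≤ K * r ^ d) :
    ∫ y, dist x y ^ (-s) ∂μ - ∫ y, rieszCutoff s ρ x y ∂μ ∈
      Set.Icc 0 (2 ^ s * K / (1 - 2 ^ (s - d)) * ρ ^ ((d : ℝ) - s)) := by
  have hq : 0 < 1 - (2 : ℝ) ^ (s - d) :=
    sub_pos.2 (Real.rpow_lt_one_of_one_lt_of_neg one_lt_two (by linarith))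
  have hball := lintegral_ball_rpow_neg_dist_le μ x hs hsd hK hρ fun r hr hrρ => by
    rw [← ofReal_measureReal]
    exact ENNReal.ofReal_le_ofReal (hμ r hr hrρ)
  have hint := integrable_rpow_neg_dist hs.le hρ (ne_top_of_le_ne_top ENNReal.ofReal_ne_top hball)
  rw [rieszCutoff, integral_indicator measurableSet_ball.compl,
    ← integral_add_compl measurableSet_ball hint, add_sub_cancel_right]
  refine ⟨setIntegral_nonneg measurableSet_ball fun y _ => by positivity, ?_⟩
  rw [integral_eq_lintegral_of_nonneg_ae (ae_of_all _ fun y => by positivity)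
    (measurable_rpow_neg_dist x s).aestronglyMeasurable]
  exact ENNReal.toReal_le_of_le_ofReal (by positivity) hball

theorem abs_measureReal_ball_sdiff_ball_sub_le {μ ν : Measure M} [IsFiniteMeasure μ]
    [IsFiniteMeasure ν] {x : M} {r ρ D : ℝ}
    (hD : ∀ r, 0 < r → |μ.real (ball x r) - ν.real (ball x r)| ≤ D) (hr : 0 < r) (hρ : 0 < ρ) :
    |μ.real (ball x r \ ball x ρ) - ν.real (ball x r \ ball x ρ)| ≤ 2 * D := by
  rcases le_total r ρ with hrρ | hρr
  · rw [Set.sdiff_eq_empty.2 (ball_subset_ball hrρ)]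
    simpa using (abs_nonneg _).trans (hD ρ hρ)
  · rw [measureReal_sdiff (ball_subset_ball hρr) measurableSet_ball,
      measureReal_sdiff (ball_subset_ball hρr) measurableSet_ball, two_mul]
    calc _ = |(μ.real (ball x r) - ν.real (ball x r)) - (μ.real (ball x ρ) - ν.real (ball x ρ))| := by
          ring_nf
      _ ≤ D + D := (abs_sub _ _).trans (add_le_add (hD r hr) (hD ρ hρ))

theorem abs_integral_rieszCutoff_sub_le {μ ν : Measure M} [IsFiniteMeasure μ] [IsFiniteMeasure ν]
    {x : M} {s ρ D : ℝ} (hs : 0 < s) (hρ : 0 < ρ)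
    (hD : ∀ r, 0 < r → |μ.real (ball x r) - ν.real (ball x r)| ≤ D) :
    |∫ y, rieszCutoff s ρ x y ∂μ - ∫ y, rieszCutoff s ρ x y ∂ν| ≤ 2 * D * ρ ^ (-s) :=
  abs_integral_sub_le_of_abs_measureReal_lt_sub_le (φ := rieszCutoff s ρ x)
    ((measurable_rpow_neg_dist x s).indicator measurableSet_ball.compl)
    (Real.rpow_nonneg hρ.le _) (fun y => rieszCutoff_mem_Icc x y hs.le hρ) fun t ht => by
      rw [setOf_lt_rieszCutoff x hs hρ ht]
      exact abs_measureReal_ball_sdiff_ball_sub_le hD (by positivity) hρ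

theorem abs_integral_rpow_neg_dist_sub_le {μ ν : Measure M} [IsFiniteMeasure μ]
    [IsFiniteMeasure ν] (x : M) {d : ℕ} {s ρ D Kμ Kν : ℝ} (hs : 0 < s) (hsd : s < d)
    (hρ : 0 < ρ) (hKμ : 0 ≤ Kμ) (hKν : 0 ≤ Kν)
    (hμ : ∀ r, 0 < r → r ≤ ρ → μ.real (ball x r \ {x}) ≤ Kμ * r ^ d)
    (hν : ∀ r, 0 < r → r ≤ ρ → ν.real (ball x r \ {x}) ≤ Kν * r ^ d)
    (hD : ∀ r, 0 < r → |μ.real (ball x r) - ν.real (ball x r)| ≤ D) :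
    |∫ y, dist x y ^ (-s) ∂μ - ∫ y, dist x y ^ (-s) ∂ν| ≤
      2 * D * ρ ^ (-s) + 2 ^ s * (Kμ + Kν) / (1 - 2 ^ (s - d)) * ρ ^ ((d : ℝ) - s) := by
  have nearμ := integral_rpow_neg_dist_sub_integral_rieszCutoff_mem_Icc μ x hs hsd hKμ hρ hμ
  have nearν := integral_rpow_neg_dist_sub_integral_rieszCutoff_mem_Icc ν x hs hsd hKν hρ hν
  have far := abs_le.1 (abs_integral_rieszCutoff_sub_le hs hρ hD)
  rw [mul_add, add_div, add_mul, abs_le]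
  constructor <;> linarith [nearμ.1, nearμ.2, nearν.1, nearν.2]

theorem meanPotentialX_eq_integral {s : ℝ} (hs : s ≠ 0) (X : Finset M) (x : M) :
    meanPotentialX s X x = ∫ y, dist x y ^ (-s) ∂empiricalMeasure X := by
  classical
  -- the term `y = x` can be put back because `0 ^ (-s) = 0` in Lean
  rw [integral_empiricalMeasure, meanPotentialX, one_div,
    Finset.sum_erase _ (by rw [dist_self, Real.zero_rpow (neg_ne_zero.2 hs)])]

theorem abs_measureReal_ball_sub_le_ballDisc (σ : Measure M) [IsProbabilityMeasure σ]
    {X : Finset M} (hX : X.Nonempty) (y : M) {r : ℝ} (hr : 0 < r) :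
    |(empiricalMeasure X).real (ball y r) - σ.real (ball y r)| ≤ ballDisc σ X := by
  have := isProbabilityMeasure_empiricalMeasure hX
  have hle : ∀ y (r : Set.Ioi (0 : ℝ)),
      |(empiricalMeasure X).real (ball y r) - σ.real (ball y r)| ≤ 1 := fun y r => by
    rw [abs_le]
    constructor <;> linarith [measureReal_le_one (μ := σ) (s := ball y r),
      measureReal_le_one (μ := empiricalMeasure X) (s := ball y r),
      measureReal_nonneg (μ := σ) (s := ball y r),
      measureReal_nonneg (μ := empiricalMeasure X) (s := ball y r)]
  simp_rw [ballDisc, ← measureReal_empiricalMeasure X measurableSet_ball, ← measureReal_def]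
  exact le_ciSup_of_le ⟨1, Set.forall_mem_range.2 fun y => ciSup_le (hle y)⟩ y
    (le_ciSup_of_le ⟨1, Set.forall_mem_range.2 (hle y)⟩ ⟨r, hr⟩ le_rfl)

theorem card_mul_le_measureReal_ball_of_separated {μ : Measure M} [IsFiniteMeasure μ]
    {Y : Finset M} {x : M} {u δ c : ℝ} (hY : ∀ y ∈ Y, y ∈ ball x u)
    (hsep : ∀ a ∈ Y, ∀ b ∈ Y, a ≠ b → 2 * δ ≤ dist a b) (hc : ∀ y ∈ Y, c ≤ μ.real (ball y δ)) :
    Y.card * c ≤ μ.real (ball x (u + δ)) := by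
  have hdisj : (Y : Set M).PairwiseDisjoint fun y => ball y δ := fun a ha b hb hab =>
    ball_disjoint_ball (by linarith [hsep a ha b hb hab])
  have hsub : (⋃ y ∈ Y, ball y δ) ⊆ ball x (u + δ) := by
    refine Set.iUnion₂_subset fun y hy z hz => ?_
    have := dist_triangle z y x
    rw [mem_ball] at hz ⊢
    linarith [mem_ball.1 (hY y hy)]
  calc Y.card * c = ∑ _y ∈ Y, c := by rw [Finset.sum_const, nsmul_eq_mul]
    _ ≤ ∑ y ∈ Y, μ.real (ball y δ) := Finset.sum_le_sum hc
    _ = μ.real (⋃ y ∈ Y, ball y δ) :=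
        (measureReal_biUnion_finset hdisj fun _ _ => measurableSet_ball).symm
    _ ≤ μ.real (ball x (u + δ)) := measureReal_mono hsub

theorem measureReal_empiricalMeasure_ball_sdiff_singleton_le {σ : Measure M} [IsFiniteMeasure σ]
    {X : Finset M} {x : M} (hx : x ∈ X) {d : ℕ} {η c K : ℝ} (hη : 0 < η) (hc : 0 < c)
    (hK : 0 ≤ K) (hsep : ∀ a ∈ X, ∀ b ∈ X, a ≠ b → η < dist a b)
    (hlow : ∀ y, c * (η / 2) ^ d ≤ σ.real (ball y (η / 2)))
    (hup : ∀ y r, 0 < r → σ.real (ball y r) ≤ K * r ^ d) {r : ℝ} (hr : 0 < r) :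
    (empiricalMeasure X).real (ball x r \ {x}) ≤ 4 ^ d * K / (c * (η ^ d * X.card)) * r ^ d := by
  classical
  have hN : (0 : ℝ) < X.card := by exact_mod_cast Finset.card_pos.2 ⟨x, hx⟩
  rcases le_or_gt r η with hrη | hηr
  · have hempty : (X : Set M) ∩ (ball x r \ {x}) = ∅ :=
      Set.eq_empty_of_forall_notMem fun y ⟨hyX, hyr, hyx⟩ =>
        (mem_ball'.1 hyr).not_ge (hrη.trans (hsep x hx y hyX (Ne.symm hyx)).le)
    rw [measureReal_empiricalMeasure X (measurableSet_ball.diff (measurableSet_singleton x)),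
      hempty, Set.ncard_empty, Nat.cast_zero, zero_div]
    positivity
  set Y := X.filter (· ∈ ball x r)
  have hY : (X : Set M) ∩ ball x r = Y := by ext; simp [Y]
  have hpack := card_mul_le_measureReal_ball_of_separated (μ := σ) (Y := Y) (u := r)
    (fun y hy => (Finset.mem_filter.1 hy).2)
    (fun a ha b hb hab => by
      linarith [hsep a (Finset.mem_filter.1 ha).1 b (Finset.mem_filter.1 hb).1 hab])
    fun y _ => hlow y
  have key : Y.card * (c * η ^ d) ≤ 4 ^ d * K * r ^ d :=
    calc Y.card * (c * η ^ d) = 2 ^ d * (Y.card * (c * (η / 2) ^ d)) := by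
          rw [div_pow]; field_simp
      _ ≤ 2 ^ d * (K * (2 * r) ^ d) :=
          mul_le_mul_of_nonneg_left (hpack.trans ((hup x _ (by positivity)).trans
            (by gcongr; linarith))) (by positivity)
      _ = 4 ^ d * K * r ^ d := by
          rw [mul_pow, show (4 : ℝ) ^ d = 2 ^ d * 2 ^ d by rw [← mul_pow]; norm_num]; ring
  calc (empiricalMeasure X).real (ball x r \ {x})
      ≤ (empiricalMeasure X).real (ball x r) := measureReal_mono Set.sdiff_subset
    _ = Y.card / X.card := by
        rw [measureReal_empiricalMeasure X measurableSet_ball, hY, Set.ncard_coe_finset]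
    _ ≤ 4 ^ d * K / (c * (η ^ d * X.card)) * r ^ d := by
        rw [div_mul_eq_mul_div, div_le_div_iff₀ hN (by positivity)]
        linear_combination (X.card : ℝ) * key

theorem abs_meanPotentialX_sub_integral_le {σ : Measure M} [IsProbabilityMeasure σ]
    {X : Finset M} {x : M} (hx : x ∈ X) {d : ℕ} {s γ η c K D : ℝ} (hs : 0 < s) (hsd : s < d)
    (hγ : 0 < γ) (hη : 0 < η) (hηN : η ^ d * X.card = γ ^ d) (hc : 0 < c) (hK : 0 ≤ K)
    (hD : 0 < D) (hsep : ∀ a ∈ X, ∀ b ∈ X, a ≠ b → η < dist a b)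
    (hlow : ∀ y, c * (η / 2) ^ d ≤ σ.real (ball y (η / 2)))
    (hup : ∀ y r, 0 < r → σ.real (ball y r) ≤ K * r ^ d) (hdisc : ballDisc σ X ≤ D) :
    |meanPotentialX s X x - ∫ y, dist x y ^ (-s) ∂σ| ≤
      (2 * γ ^ (-s) + 2 ^ s * (4 ^ d * K / (c * γ ^ d) + K) / (1 - 2 ^ (s - d)) *
        γ ^ ((d : ℝ) - s)) * D ^ (1 - s / d) := by
  set ρ := γ * D ^ ((1 : ℝ) / d)
  have hνnear : ∀ r, 0 < r → r ≤ ρ →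
      (empiricalMeasure X).real (ball x r \ {x}) ≤ 4 ^ d * K / (c * γ ^ d) * r ^ d :=
    fun r hr _ => by
      simpa only [hηN] using
        measureReal_empiricalMeasure_ball_sdiff_singleton_le hx hη hc hK hsep hlow hup hr
  rw [meanPotentialX_eq_integral hs.ne']
  calc _ ≤ 2 * D * ρ ^ (-s) +
        2 ^ s * (4 ^ d * K / (c * γ ^ d) + K) / (1 - 2 ^ (s - d)) * ρ ^ ((d : ℝ) - s) :=
        abs_integral_rpow_neg_dist_sub_le x hs hsd (by positivity) (by positivity) hK hνnear
          (fun r hr _ => (measureReal_mono Set.sdiff_subset).trans (hup x r hr))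
          fun r hr => (abs_measureReal_ball_sub_le_ballDisc σ ⟨x, hx⟩ x hr).trans hdisc
    _ = _ := by
        rw [mul_assoc 2 D, mul_mul_rpow_one_div_rpow_neg hγ.le hD,
          mul_rpow_one_div_rpow_sub hγ.le hD.le (hs.trans hsd).ne']
        ring

end Metric

theorem pointwise_potential_difference_bound_general
    {M : Type*} [MetricSpace M]
    [MeasurableSpace M] [BorelSpace M]
    (d : ℕ)
    (σ : Measure M) [IsProbabilityMeasure σ]
    -- Regularity hypothesis
    (Cbot Ctop : ℝ) (hCbot : 0 < Cbot) (hCbotTop : Cbot ≤ Ctop)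
    (hreg : ∀ (x : M) (r : ℝ), 0 < r → r ≤ diam (Set.univ : Set M) →
      Cbot * r ^ d ≤ (σ (ball x r)).toReal ∧ (σ (ball x r)).toReal ≤ Ctop * r ^ d)
    (s : ℝ) (hs0 : 0 < s) (hsd : s < d)
    (γ : ℝ) (hγ : 0 < γ) :
    ∃ C > (0 : ℝ), ∃ D0 : ℝ, 0 < D0 ∧ D0 < 1 ∧
      ∀ X : Finset M, X.Nonempty →
        (∀ x ∈ X, ∀ y ∈ X, x ≠ y → dist x y > γ * ((X.card : ℝ)) ^ (-(1 : ℝ) / d)) →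
        ∀ D : ℝ, 1 / (X.card : ℝ) < D → D ≤ D0 →
          γ * D ^ ((1 : ℝ) / d) < diam (Set.univ : Set M) →
          ballDisc σ X ≤ D →
          ∀ x ∈ X,
            |meanPotentialX s X x - ∫ y, dist x y ^ (-s) ∂σ| ≤
              C * D ^ (1 - s / (d : ℝ)) := by
  have hd : (0 : ℝ) < d := hs0.trans hsd
  have hq : 0 < 1 - (2 : ℝ) ^ (s - d) :=
    sub_pos.2 (Real.rpow_lt_one_of_one_lt_of_neg one_lt_two (by linarith))
  set R := diam (Set.univ : Set M)
  set K := Ctop + (R ^ d)⁻¹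
  have hK : 0 < K := by
    have := hCbot.trans_le hCbotTop
    have : 0 ≤ R := diam_nonneg
    positivity
  refine ⟨2 * γ ^ (-s) + 2 ^ s * (4 ^ d * K / (Cbot * γ ^ d) + K) / (1 - 2 ^ (s - d)) *
    γ ^ ((d : ℝ) - s), by positivity, 1 / 2, by norm_num, by norm_num, ?_⟩
  intro X hX hsep D hND _ hρR hdisc x hx
  have hN : (0 : ℝ) < X.card := by exact_mod_cast hX.card_pos
  have hD : 0 < D := (by positivity : (0 : ℝ) < 1 / X.card).trans hND
  have hηρ : γ * (X.card : ℝ) ^ (-(1 : ℝ) / d) < γ * D ^ ((1 : ℝ) / d) := by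
    rw [neg_div, Real.rpow_neg hN.le, ← Real.inv_rpow hN.le, ← one_div]
    gcongr
  have hη : 0 < γ * (X.card : ℝ) ^ (-(1 : ℝ) / d) := by positivity
  exact abs_meanPotentialX_sub_integral_le hx hs0 hsd hγ hη
    (mul_rpow_neg_one_div_pow_mul hN (by exact_mod_cast hd.ne')) hCbot hK.le hD hsep
    (fun y => (hreg y _ (by positivity) (by linarith)).1)
    (measureReal_ball_le_of_forall_le (hCbot.le.trans hCbotTop) (hη.trans (hηρ.trans hρR))
      fun y r hr hrR => (hreg y r hr hrR).2) hdisc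

theorem pointwise_potential_difference_bound
    {M : Type*} [MetricSpace M] [CompactSpace M] [ConnectedSpace M] [Nontrivial M]
    [MeasurableSpace M] [BorelSpace M]
    (d : ℕ) (hd : 1 ≤ d)
    (σ : Measure M) [IsProbabilityMeasure σ]
    -- Regularity hypothesis
    (Cbot Ctop : ℝ) (hCbot : 0 < Cbot) (hCbotTop : Cbot ≤ Ctop)
    (hreg : ∀ (x : M) (r : ℝ), 0 < r → r ≤ diam (Set.univ : Set M) →
      Cbot * r ^ d ≤ (σ (ball x r)).toReal ∧ (σ (ball x r)).toReal ≤ Ctop * r ^ d)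
    (s : ℝ) (hs0 : 0 < s) (hsd : s < d)
    (γ : ℝ) (hγ : 0 < γ) :
    ∃ C > (0 : ℝ), ∃ D0 : ℝ, 0 < D0 ∧ D0 < 1 ∧
      ∀ X : Finset M, X.Nonempty →
        (∀ x ∈ X, ∀ y ∈ X, x ≠ y → dist x y > γ * ((X.card : ℝ)) ^ (-(1 : ℝ) / d)) →
        ∀ D : ℝ, 1 / (X.card : ℝ) < D → D ≤ D0 →
          γ * D ^ ((1 : ℝ) / d) < diam (Set.univ : Set M) →
          ballDisc σ X ≤ D →
          ∀ x ∈ X,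
            |meanPotentialX s X x - ∫ y, dist x y ^ (-s) ∂σ| ≤
              C * D ^ (1 - s / (d : ℝ)) :=
  pointwise_potential_difference_bound_general d σ Cbot Ctop hCbot hCbotTop hreg s hs0 hsd γ hγ
end
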